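/- arXiv:1409.6674 — 8 statements merged into one kernel-verified Lean document; each statement's English description precedes it below -/
import Mathlib

section
/- For all n ≥ 0, if (d + √k)^n = a + b√k with a, b rational, then the n-th iterate of the map f(x) = (dx + k)/(x + d) applied to ∞ equals a/b. -/
/-- The linear fractional transformation `f(x) = (dx + k)/(x + d)` acting on
the projective line `ℚℙ¹ = OnePoint ℚ`, with `f(∞) = d`. -/
noncomputable def lft (d k : ℚ) : OnePoint ℚ → OnePoint ℚ := fun x =>
  match x with
  | none => (d : OnePoint ℚ)
  | some x => if x + d = 0 then OnePoint.infty else ((d * x + k) / (x + d) : ℚ)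

/-- The point `a/b` of the projective line, with `a/0 = ∞`. -/
noncomputable def ratio (a b : ℚ) : OnePoint ℚ :=
  if b = 0 then OnePoint.infty else ((a / b : ℚ) : OnePoint ℚ)

/-!
`lft d k` is the projectivisation of the linear map `(a, b) ↦ (d a + k b, a + d b)`, which is
multiplication by `d + √k` in the coordinates `a + b √k`. Its determinant `d² - k` does not
vanish, so it maps nonzero vectors to nonzero vectors, and iterating it from `(1, 0)` (the
point `∞`) tracks both `(d + √k)ⁿ` and the orbit of `∞`. Since `√k` is irrational, the
coordinates of `(d + √k)ⁿ` are the given `a, b`.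
-/

def mulCoeffs (d k : ℚ) (v : ℚ × ℚ) : ℚ × ℚ :=
  (d * v.1 + k * v.2, v.1 + d * v.2)

lemma mulCoeffs_ne_zero {d k : ℚ} (hdk : d ^ 2 ≠ k) {v : ℚ × ℚ} (hv : v ≠ 0) :
    mulCoeffs d k v ≠ 0 := by
  obtain ⟨p, q⟩ := v
  intro h
  simp only [mulCoeffs, Prod.mk_eq_zero] at h
  obtain ⟨h₁, h₂⟩ := h
  have hq : q * (k - d ^ 2) = 0 := by linear_combination h₁ - d * h₂
  rcases mul_eq_zero.mp hq with hq | hkd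
  · exact hv (Prod.ext (by simpa [hq] using h₂) hq)
  · exact hdk (by linarith)

lemma iterate_mulCoeffs_ne_zero {d k : ℚ} (hdk : d ^ 2 ≠ k) (n : ℕ) :
    (mulCoeffs d k)^[n] (1, 0) ≠ 0 := by
  induction n with
  | zero => simp
  | succ n ih => rw [Function.iterate_succ_apply']; exact mulCoeffs_ne_zero hdk ih

lemma lft_coe (d k x : ℚ) :
    lft d k x = if x + d = 0 then OnePoint.infty else ((d * x + k) / (x + d) : ℚ) :=
  rfl

lemma lft_ratio (d k : ℚ) {p q : ℚ} (h : (p, q) ≠ 0) :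
    lft d k (ratio p q) = ratio (mulCoeffs d k (p, q)).1 (mulCoeffs d k (p, q)).2 := by
  simp only [mulCoeffs]
  by_cases hq : q = 0
  · have hp : p ≠ 0 := fun hp => h (by simp [hp, hq])
    subst hq
    simp only [ratio, mul_zero, add_zero, if_neg hp, mul_div_cancel_right₀ _ hp]
    rfl
  · have hsum : p / q + d = 0 ↔ p + d * q = 0 := by
      rw [div_add' _ _ _ hq, div_eq_zero_iff, or_iff_left hq, mul_comm]
    rw [ratio, if_neg hq, lft_coe, ratio]
    by_cases hpq : p + d * q = 0
    · rw [if_pos (hsum.mpr hpq), if_pos hpq]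
    · rw [if_neg (mt hsum.mp hpq), if_neg hpq]
      congr 1
      field_simp

lemma iterate_lft_infty {d k : ℚ} (hdk : d ^ 2 ≠ k) (n : ℕ) :
    (lft d k)^[n] OnePoint.infty =
      ratio ((mulCoeffs d k)^[n] (1, 0)).1 ((mulCoeffs d k)^[n] (1, 0)).2 := by
  induction n with
  | zero => simp [ratio]
  | succ n ih =>
    rw [Function.iterate_succ_apply', ih, Function.iterate_succ_apply' (mulCoeffs d k)]
    exact lft_ratio d k (iterate_mulCoeffs_ne_zero hdk n)

lemma add_mul_sqrt_pow (d k : ℚ) (hk : 0 ≤ k) (n : ℕ) :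
    ((d : ℝ) + √k) ^ n =
      ((mulCoeffs d k)^[n] (1, 0)).1 + ((mulCoeffs d k)^[n] (1, 0)).2 * √k := by
  induction n with
  | zero => simp
  | succ n ih =>
    have hsq : √(k : ℝ) ^ 2 = k := Real.sq_sqrt (by exact_mod_cast hk)
    rw [pow_succ, ih, Function.iterate_succ_apply']
    simp only [mulCoeffs]
    push_cast
    linear_combination ((mulCoeffs d k)^[n] (1, 0)).2 * hsq

lemma Irrational.ratCast_add_mul_inj {x : ℝ} (hx : Irrational x) {a b a' b' : ℚ}
    (h : (a : ℝ) + b * x = a' + b' * x) : a = a' ∧ b = b' := by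
  have hb : b = b' := by
    by_contra hb
    have hsub : ((b : ℝ) - b') ≠ 0 := sub_ne_zero.mpr (mod_cast hb)
    refine hx.ne_rat ((a' - a) / (b - b')) ?_
    push_cast
    field_simp
    linarith
  subst hb
  exact ⟨by exact_mod_cast add_right_cancel h, rfl⟩

theorem stmt0_general (k d : ℚ) (hk : 0 < k) (hknsq : ¬ ∃ r : ℚ, r ^ 2 = k)
    (n : ℕ) (a b : ℚ)
    (hab : ((d : ℝ) + Real.sqrt k) ^ n = (a : ℝ) + (b : ℝ) * Real.sqrt k) :
    (lft d k)^[n] OnePoint.infty = ratio a b := by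
  have hirr : Irrational √(k : ℝ) :=
    (irrational_sqrt_ratCast_iff_of_nonneg hk.le).mpr fun ⟨r, hr⟩ => hknsq ⟨r, by rw [hr]; ring⟩
  obtain ⟨rfl, rfl⟩ := hirr.ratCast_add_mul_inj ((add_mul_sqrt_pow d k hk.le n).symm.trans hab)
  exact iterate_lft_infty (fun hdk => hknsq ⟨d, hdk⟩) n

/-- For all `n ≥ 0`, if `(d + √k)^n = a + b√k` with `a, b` rational, then the `n`-th
iterate of `f(x) = (dx + k)/(x + d)` applied to `∞` equals `a/b`. -/
theorem stmt0 (k d : ℚ) (hk : 0 < k) (hknsq : ¬ ∃ r : ℚ, r ^ 2 = k) (hd : 0 < d)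
    (n : ℕ) (a b : ℚ)
    (hab : ((d : ℝ) + Real.sqrt k) ^ n = (a : ℝ) + (b : ℝ) * Real.sqrt k) :
    (lft d k)^[n] OnePoint.infty = ratio a b :=
  stmt0_general k d hk hknsq n a b hab
end

section
/- If A is a 2×2 invertible matrix over ℚ with (tr A)²/det A an integer, then (tr A²)²/det A² = ((tr A)²/det A − 2)² is also an integer; conversely, if x ∈ ℚ and (x−2)² ∈ ℤ, then x ∈ ℤ. -/
/-- If `A` is an invertible 2×2 rational matrix with `(tr A)²/det A` an integer, then
`(tr A²)²/det A² = ((tr A)²/det A − 2)²` is also an integer; conversely, if `x ∈ ℚ` and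
`(x−2)² ∈ ℤ`, then `x ∈ ℤ`. -/
theorem stmt1 :
    (∀ A : Matrix (Fin 2) (Fin 2) ℚ, IsUnit A.det →
      (∃ z : ℤ, A.trace ^ 2 / A.det = (z : ℚ)) →
      (A * A).trace ^ 2 / (A * A).det = (A.trace ^ 2 / A.det - 2) ^ 2 ∧
        ∃ z : ℤ, (A * A).trace ^ 2 / (A * A).det = (z : ℚ)) ∧
    (∀ x : ℚ, (∃ z : ℤ, (x - 2) ^ 2 = (z : ℚ)) → ∃ z : ℤ, x = (z : ℚ)) := by
  constructor
  · intro A hA ⟨z, hz⟩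
    have hd : A.det ≠ 0 := hA.ne_zero
    have htr : (A * A).trace = A.trace ^ 2 - 2 * A.det := by
      simp [Matrix.trace_fin_two, Matrix.det_fin_two, Matrix.mul_apply, Fin.sum_univ_two]
      ring
    have hdet : (A * A).det = A.det ^ 2 := by rw [Matrix.det_mul]; ring
    have heq : (A * A).trace ^ 2 / (A * A).det = (A.trace ^ 2 / A.det - 2) ^ 2 := by
      rw [htr, hdet]
      field_simp
    refine ⟨heq, (z - 2) ^ 2, ?_⟩
    rw [heq, hz]
    push_cast
    ring
  · intro x ⟨z, hz⟩
    have hden : ((x - 2) ^ 2).den = 1 := by rw [hz]; exact Rat.den_intCast z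
    rw [Rat.den_pow] at hden
    have h1 : (x - 2).den = 1 := by nlinarith [(x - 2).den_pos]
    refine ⟨(x - 2).num + 2, ?_⟩
    push_cast [Rat.coe_int_num_of_den_eq_one h1]
    ring
end

section
/- Let A ∈ GL₂(ℚ) with det A = 1. If A^n has integer entries for some n ≥ 1, then tr A is an integer. -/
/-!
Some positive power of `A` has integer entries, hence is integral over `ℤ` by Cayley–Hamilton,
and therefore so is `A`; likewise `adj A`, because `adj (A ^ n) = (adj A) ^ n`. For a `2 × 2`
matrix `A + adj A = (tr A) • 1`, and `A` commutes with `adj A`, so `tr A` is a rational number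
integral over `ℤ`, i.e. an integer.
-/

open scoped IsMulCommutative in
theorem IsIntegral.add_of_commute {R A : Type*} [CommRing R] [Ring A] [Algebra R A] {x y : A}
    (hxy : Commute x y) (hx : IsIntegral R x) (hy : IsIntegral R y) : IsIntegral R (x + y) := by
  let S := Algebra.adjoin R ({x, y} : Set A)
  have := Algebra.isMulCommutative_adjoin R (s := {x, y}) (by
    rintro a (rfl | rfl) b (rfl | rfl) <;> first | rfl | exact hxy.eq | exact hxy.eq.symm)
  have hS (z : S) : IsIntegral R z ↔ IsIntegral R (z : A) :=
    (isIntegral_algHom_iff S.val Subtype.val_injective).symm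
  let x' : S := ⟨x, Algebra.subset_adjoin (by simp)⟩
  let y' : S := ⟨y, Algebra.subset_adjoin (by simp)⟩
  exact (hS (x' + y')).1 (((hS x').2 hx).add ((hS y').2 hy))

namespace Matrix

variable {n R S : Type*} [Fintype n] [DecidableEq n] [CommRing R] [CommRing S] [Algebra R S]

theorem isIntegral_map_algebraMap (B : Matrix n n R) : IsIntegral R (B.map (algebraMap R S)) :=
  B.isIntegral.map (Algebra.ofId R S).mapMatrix

theorem commute_adjugate (A : Matrix n n S) : Commute A A.adjugate := by
  rw [Commute, SemiconjBy, mul_adjugate, adjugate_mul]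

theorem add_adjugate_fin_two (A : Matrix (Fin 2) (Fin 2) S) :
    A + A.adjugate = algebraMap S _ A.trace := by
  ext i j
  fin_cases i <;> fin_cases j <;>
    simp [adjugate_fin_two, trace_fin_two, algebraMap_matrix_apply, add_comm]

theorem isIntegral_trace_fin_two_of_pow_eq_map (A : Matrix (Fin 2) (Fin 2) S) {k : ℕ}
    (hk : 0 < k) (B : Matrix (Fin 2) (Fin 2) R) (hB : A ^ k = B.map (algebraMap R S)) :
    IsIntegral R A.trace := by
  have hA : IsIntegral R A := .of_pow hk (hB ▸ isIntegral_map_algebraMap B)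
  have hadj : IsIntegral R A.adjugate := by
    refine .of_pow hk ?_
    rw [← adjugate_pow, hB, ← RingHom.mapMatrix_apply, ← RingHom.map_adjugate]
    exact isIntegral_map_algebraMap B.adjugate
  have hinj : Function.Injective (algebraMap S (Matrix (Fin 2) (Fin 2) S)) := fun r s h => by
    simpa [algebraMap_matrix_apply] using congr_fun₂ h 0 0
  rw [← isIntegral_algebraMap_iff hinj, ← add_adjugate_fin_two]
  exact hA.add_of_commute A.commute_adjugate hadj

end Matrix

theorem stmt2_general (A : Matrix (Fin 2) (Fin 2) ℚ)
    (n : ℕ) (hn : 1 ≤ n) (hint : ∀ i j, ∃ z : ℤ, (A ^ n) i j = (z : ℚ)) :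
    ∃ z : ℤ, A.trace = (z : ℚ) := by
  choose B hB using hint
  have hpow : A ^ n = (Matrix.of B).map (algebraMap ℤ ℚ) := by
    ext i j
    simp [hB]
  obtain ⟨z, hz⟩ := IsIntegrallyClosed.isIntegral_iff.mp
    (A.isIntegral_trace_fin_two_of_pow_eq_map hn _ hpow)
  exact ⟨z, by simpa using hz.symm⟩

/-- Let `A ∈ GL₂(ℚ)` with `det A = 1`. If `A^n` has integer entries for some `n ≥ 1`,
then `tr A` is an integer. -/
theorem stmt2 (A : Matrix (Fin 2) (Fin 2) ℚ) (hdet : A.det = 1)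
    (n : ℕ) (hn : 1 ≤ n) (hint : ∀ i j, ∃ z : ℤ, (A ^ n) i j = (z : ℚ)) :
    ∃ z : ℤ, A.trace = (z : ℚ) :=
  stmt2_general A n hn hint
end

section
/- Let A ∈ GL₂(ℚ) with det A = 1 and tr A ∈ ℤ. Then there exists n ≥ 1 such that A^n has integer entries. -/
/-- Lucas-type sequence: `uu t 0 = 0`, `uu t 1 = 1`, `uu t (n+2) = t * uu t (n+1) - uu t n`. -/
def uu (t : ℤ) : ℕ → ℤ
  | 0 => 0
  | 1 => 1
  | (n+2) => t * uu t (n+1) - uu t n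

lemma uu_exists_dvd (t : ℤ) (m : ℕ) [NeZero m] : ∃ e, 1 ≤ e ∧ (m : ℤ) ∣ uu t e := by
  classical
  let f : ZMod m × ZMod m → ZMod m × ZMod m := fun p => ((p.2 : ZMod m), (t : ZMod m) * p.2 - p.1)
  let s : ℕ → ZMod m × ZMod m := fun n => ((uu t n : ZMod m), (uu t (n+1) : ZMod m))
  have huu : ∀ n, uu t (n + 2) = t * uu t (n+1) - uu t n := fun n => rfl
  have hstep : ∀ n, s (n + 1) = f (s n) := by
    intro n
    have h2 : ((uu t (n+2) : ℤ) : ZMod m) = (t : ZMod m) * (uu t (n+1) : ZMod m) - (uu t n : ZMod m) := by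
      rw [huu]; push_cast; ring
    simp only [s, f, h2]
  have hfinj : Function.Injective f := by
    rintro ⟨a, b⟩ ⟨c, d⟩ h
    simp only [f, Prod.mk.injEq] at h
    obtain ⟨h1, h2⟩ := h
    subst h1
    have : a = c := by linear_combination -h2
    rw [this]
  obtain ⟨i, j, hij, hsij⟩ := Finite.exists_ne_map_eq_of_infinite s
  wlog hlt : i < j generalizing i j
  · exact this j i hij.symm hsij.symm (by omega)
  have hshift : ∀ k e, s (k + e) = s k → s e = s 0 := by
    intro k
    induction k with
    | zero => intro e h; simpa using h
    | succ l ih =>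
        intro e h
        apply ih
        apply hfinj
        rw [← hstep, ← hstep]
        have heq : l + 1 + e = l + e + 1 := by omega
        rw [heq] at h
        exact h
  refine ⟨j - i, by omega, ?_⟩
  have hse : s (j - i) = s 0 := by
    apply hshift i
    have : i + (j - i) = j := by omega
    rw [this]; exact hsij.symm
  have h0 : (uu t (j - i) : ZMod m) = (uu t 0 : ZMod m) := congrArg Prod.fst hse
  have : (uu t (j - i) : ZMod m) = 0 := by rw [h0]; simp [uu]
  exact (ZMod.intCast_zmod_eq_zero_iff_dvd _ _).mp this

/-- Let `A ∈ GL₂(ℚ)` with `det A = 1` and `tr A ∈ ℤ`. Then there exists `n ≥ 1`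
such that `A^n` has integer entries. -/
theorem stmt3 (A : Matrix (Fin 2) (Fin 2) ℚ) (hdet : A.det = 1)
    (ht : ∃ z : ℤ, A.trace = (z : ℚ)) :
    ∃ n : ℕ, 1 ≤ n ∧ ∀ i j, ∃ z : ℤ, (A ^ n) i j = (z : ℚ) := by
  obtain ⟨t, htr⟩ := ht
  -- Cayley–Hamilton for 2×2
  have hsq : A * A = (t : ℚ) • A - 1 := by
    rw [← htr]
    ext i j
    rw [Matrix.trace_fin_two] at *
    have hd := hdet
    rw [Matrix.det_fin_two] at hd
    fin_cases i <;> fin_cases j <;>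
      simp [Matrix.mul_apply, Fin.sum_univ_two, Matrix.one_apply] <;>
      nlinarith [hd]
  -- powers of A in terms of uu
  have hpow : ∀ n : ℕ, A ^ (n + 1) = ((uu t (n+1) : ℚ)) • A - ((uu t n : ℚ)) • 1 := by
    intro n
    induction n with
    | zero => simp [uu]
    | succ k ih =>
        rw [pow_succ, ih, sub_mul, smul_mul_assoc, smul_mul_assoc, hsq, one_mul,
          show uu t (k + 2) = t * uu t (k+1) - uu t k from rfl]
        push_cast
        rw [smul_sub]
        module
  -- common denominator
  set m : ℕ := (A 0 0).den * (A 0 1).den * (A 1 0).den * (A 1 1).den with hm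
  have hm0 : 0 < m := by positivity
  have hden : ∀ i j, (A i j).den ∣ m := by
    intro i j
    fin_cases i <;> fin_cases j
    · exact dvd_mul_of_dvd_left (dvd_mul_of_dvd_left (dvd_mul_right _ _) _) _
    · exact dvd_mul_of_dvd_left (dvd_mul_of_dvd_left (dvd_mul_left _ _) _) _
    · exact dvd_mul_of_dvd_left (dvd_mul_left _ _) _
    · exact dvd_mul_left _ _
  have hint : ∀ i j, ∃ z : ℤ, (m : ℚ) * A i j = (z : ℚ) := by
    intro i j
    obtain ⟨c, hc⟩ := hden i j
    refine ⟨(A i j).num * c, ?_⟩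
    have h2 : ((A i j).den : ℚ) * A i j = (A i j).num := by
      rw [mul_comm]; exact_mod_cast Rat.mul_den_eq_num (A i j)
    push_cast [hc]
    nlinarith [h2]
  haveI : NeZero m := ⟨hm0.ne'⟩
  obtain ⟨e, he1, c, hc⟩ := uu_exists_dvd t m
  obtain ⟨e', he'⟩ : ∃ e', e = e' + 1 := ⟨e - 1, by omega⟩
  rw [he'] at hc
  refine ⟨e, he1, ?_⟩
  intro i' j'
  obtain ⟨z, hz⟩ := hint i' j'
  rw [he', hpow e']
  refine ⟨c * z - uu t e' * (if i' = j' then 1 else 0), ?_⟩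
  simp only [Matrix.sub_apply, Matrix.smul_apply, Matrix.one_apply, smul_eq_mul, hc]
  push_cast
  split <;> linear_combination (c : ℚ) * hz
end

section
/- Let k be a non-square positive integer and d a positive rational. If some iterate f^n(∞) of f(x) = (dx+k)/(x+d) is a Pellian convergent (i.e., equal to p/q with p² − kq² = ±1), then infinitely many iterates f^{in}(∞), i ≥ 1, are Pellian convergents. -/
/-!
In `ℚ(√k)` the iterate `f^m(∞)` is the ratio of the two coordinates of `(d + √k)^m`.
If `f^n(∞) = p/q`, then `(d + √k)^n = r(p + q√k)` for some rational `r ≠ 0`, so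
`(d + √k)^{in} = r^i (p + q√k)^i`, and `f^{in}(∞) = P/Q` where `P + Q√k = (p + q√k)^i`
lies in `ℤ[√k]` and has norm `(±1)^i = ±1` by multiplicativity of the norm.
Since `d > 0` and `k ≥ 0`, all these coordinates are positive, so no denominator vanishes.
-/

open QuadraticAlgebra

namespace QuadraticAlgebra

section Positivity

variable {R : Type*} [CommRing R] [LinearOrder R] [IsStrictOrderedRing R] {a b : R}
  {z : QuadraticAlgebra R a b}

theorem re_pos_im_nonneg_pow (ha : 0 ≤ a) (hb : 0 ≤ b) (hre : 0 < z.re) (him : 0 ≤ z.im) :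
    ∀ i : ℕ, 0 < (z ^ i).re ∧ 0 ≤ (z ^ i).im
  | 0 => by simp
  | i + 1 => by
    obtain ⟨hre_i, him_i⟩ := re_pos_im_nonneg_pow ha hb hre him i
    rw [pow_succ, re_mul, im_mul]
    constructor <;> positivity

theorem im_pow_pos (ha : 0 ≤ a) (hb : 0 ≤ b) (hre : 0 < z.re) (him : 0 < z.im) {i : ℕ}
    (hi : i ≠ 0) : 0 < (z ^ i).im := by
  obtain ⟨j, rfl⟩ := Nat.exists_eq_succ_of_ne_zero hi
  obtain ⟨hre_j, him_j⟩ := re_pos_im_nonneg_pow ha hb hre him.le j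
  rw [pow_succ, im_mul]
  positivity

end Positivity

theorem norm_eq_sq_sub {R : Type*} [CommRing R] {a : R} (z : QuadraticAlgebra R a 0) :
    z.norm = z.re ^ 2 - a * z.im ^ 2 := by
  rw [norm_def]
  ring

def toRat (a : ℤ) : QuadraticAlgebra ℤ a 0 →ₐ[ℤ] QuadraticAlgebra ℚ a 0 :=
  lift ⟨omega, by ext <;> simp⟩

@[simp]
theorem re_toRat (a : ℤ) (z : QuadraticAlgebra ℤ a 0) : (toRat a z).re = z.re := by
  simp [toRat]

@[simp]
theorem im_toRat (a : ℤ) (z : QuadraticAlgebra ℤ a 0) : (toRat a z).im = z.im := by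
  simp [toRat]

end QuadraticAlgebra

theorem exists_mul_of_ratio_eq {a b p q : ℚ} (hq : q ≠ 0) (h : ratio a b = ratio p q) :
    ∃ r ≠ 0, a = r * p ∧ b = r * q := by
  have hb : b ≠ 0 := by
    rintro rfl
    simp [ratio, hq] at h
  simp only [ratio, hb, hq, if_false, OnePoint.coe_eq_coe] at h
  refine ⟨b / q, div_ne_zero hb hq, ?_, by field_simp⟩
  rw [div_eq_div_iff hb hq] at h
  field_simp
  linarith

theorem ratio_mul_mul {c : ℚ} (hc : c ≠ 0) (a b : ℚ) : ratio (c * a) (c * b) = ratio a b := by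
  by_cases hb : b = 0
  · simp [ratio, hb]
  · simp only [ratio, mul_eq_zero, hc, hb, or_self, if_false, mul_div_mul_left _ _ hc]

theorem lft_ratio_s4 (d k : ℚ) {a b : ℚ} (ha : a ≠ 0) (hab : a + d * b ≠ 0) :
    lft d k (ratio a b) = ratio (d * a + k * b) (a + d * b) := by
  by_cases hb : b = 0
  · simp [ratio, hb, ha, lft]
  · have hx : a / b + d ≠ 0 := by
      rw [div_add' _ _ _ hb]
      exact div_ne_zero (fun h => hab (by linarith)) hb
    simp only [ratio, hb, hab, if_false]
    change (if a / b + d = 0 then _ else _) = _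
    rw [if_neg hx]
    congr 1
    field_simp

theorem lft_iterate_infty {d : ℚ} (hd : 0 < d) {k : ℚ} (hk : 0 ≤ k) (m : ℕ) :
    (lft d k)^[m] OnePoint.infty =
      ratio (⟨d, 1⟩ ^ m : QuadraticAlgebra ℚ k 0).re
        (⟨d, 1⟩ ^ m : QuadraticAlgebra ℚ k 0).im := by
  induction m with
  | zero => simp [ratio, im_one]
  | succ m ih =>
    obtain ⟨hre, him⟩ := re_pos_im_nonneg_pow (z := ⟨d, 1⟩) hk le_rfl hd zero_le_one m
    rw [Function.iterate_succ_apply', ih, lft_ratio_s4 d k hre.ne' (by positivity), pow_succ']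
    congr 1 <;> simp only [re_mul, im_mul] <;> ring

theorem stmt4_general (k : ℕ) (d : ℚ) (hd : 0 < d)
    (n : ℕ) (p q : ℤ) (hp : 0 < p) (hq : 0 < q)
    (hpell : p ^ 2 - (k : ℤ) * q ^ 2 = 1 ∨ p ^ 2 - (k : ℤ) * q ^ 2 = -1)
    (hit : (lft d (k : ℚ))^[n] OnePoint.infty = ratio (p : ℚ) (q : ℚ)) :
    ∀ i : ℕ, 1 ≤ i → ∃ P Q : ℤ, 0 < P ∧ 0 < Q ∧
      (P ^ 2 - (k : ℤ) * Q ^ 2 = 1 ∨ P ^ 2 - (k : ℤ) * Q ^ 2 = -1) ∧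
      (lft d (k : ℚ))^[i * n] OnePoint.infty = ratio (P : ℚ) (Q : ℚ) := by
  intro i hi
  rw [← Int.cast_natCast (R := ℚ) k] at hit ⊢
  rw [lft_iterate_infty hd (by positivity)] at hit ⊢
  obtain ⟨r, hr, hre, him⟩ := exists_mul_of_ratio_eq (by positivity) hit
  set w : QuadraticAlgebra ℤ k 0 := ⟨p, q⟩
  have hpow_n : (⟨d, 1⟩ ^ n : QuadraticAlgebra ℚ (k : ℤ) 0) = r • toRat k w := by
    ext <;> simp [w, hre, him]
  have hk : (0 : ℤ) ≤ k := by positivity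
  refine ⟨(w ^ i).re, (w ^ i).im, (re_pos_im_nonneg_pow hk le_rfl hp hq.le i).1,
    im_pow_pos hk le_rfl hp hq (by omega), ?_, ?_⟩
  · have hw : IsUnit w.norm := by
      rw [norm_eq_sq_sub]
      exact Int.isUnit_iff.mpr hpell
    rw [← Int.isUnit_iff, ← norm_eq_sq_sub, map_pow]
    exact hw.pow i
  · rw [mul_comm, pow_mul, hpow_n, smul_pow, re_smul, im_smul, smul_eq_mul, smul_eq_mul,
      ratio_mul_mul (pow_ne_zero i hr), ← map_pow, re_toRat, im_toRat]

/-- If some iterate `f^n(∞)` of `f(x) = (dx+k)/(x+d)` is a Pellian convergent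
(equal to `p/q` with `p² − kq² = ±1`), then all the iterates `f^{in}(∞)`, `i ≥ 1`,
are Pellian convergents (so infinitely many iterates are Pellian). -/
theorem stmt4 (k : ℕ) (hk : 0 < k) (hknsq : ¬ IsSquare k) (d : ℚ) (hd : 0 < d)
    (n : ℕ) (p q : ℤ) (hp : 0 < p) (hq : 0 < q)
    (hpell : p ^ 2 - (k : ℤ) * q ^ 2 = 1 ∨ p ^ 2 - (k : ℤ) * q ^ 2 = -1)
    (hit : (lft d (k : ℚ))^[n] OnePoint.infty = ratio (p : ℚ) (q : ℚ)) :
    ∀ i : ℕ, 1 ≤ i → ∃ P Q : ℤ, 0 < P ∧ 0 < Q ∧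
      (P ^ 2 - (k : ℤ) * Q ^ 2 = 1 ∨ P ^ 2 - (k : ℤ) * Q ^ 2 = -1) ∧
      (lft d (k : ℚ))^[i * n] OnePoint.infty = ratio (P : ℚ) (Q : ℚ) :=
  stmt4_general k d hd n p q hp hq hpell hit
end

section
/- Suppose k, d are positive integers such that R = 4d²/(k−d²) is an integer. Then there exist positive integers s, v, m such that d = svm/2 and k = s²v(vm² + 4ε)/4, where ε = sgn(k − d²). -/
/-!
With `ε = sign (k - d²)`, the positive integers `ε (k - d²)` and `ε R` have product `(2d)²`.
Dividing both by their gcd `v` leaves coprime factors of a square, hence squares `s²` and `m²`;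
then `2d = svm`, and `4k = 4(k - d²) + (2d)² = 4ε v s² + s² v² m²`.
-/

theorem Int.exists_eq_sq_of_isCoprime_of_mul_eq_sq {a b c : ℤ} (hab : IsCoprime a b)
    (ha : 0 < a) (h : a * b = c ^ 2) : ∃ m : ℤ, 0 < m ∧ a = m ^ 2 := by
  obtain ⟨m, hm | hm⟩ := Int.sq_of_isCoprime hab h
  · refine ⟨|m|, abs_pos.mpr ?_, by rw [sq_abs, hm]⟩
    rintro rfl
    simp [hm] at ha
  · nlinarith [sq_nonneg m]

theorem Int.exists_eq_mul_sq_of_mul_eq_sq {a b c : ℤ} (ha : 0 < a) (hb : 0 < b)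
    (h : a * b = c ^ 2) :
    ∃ g s m : ℤ, 0 < g ∧ 0 < s ∧ 0 < m ∧ a = g * s ^ 2 ∧ b = g * m ^ 2 := by
  obtain ⟨g, a', b', hg, hcop, rfl, rfl⟩ :=
    Int.exists_gcd_one' (Int.gcd_pos_of_ne_zero_left b ha.ne')
  have hg : (0 : ℤ) < g := by exact_mod_cast hg
  have hcop : IsCoprime a' b' := Int.isCoprime_iff_gcd_eq_one.mpr hcop
  obtain ⟨t, rfl⟩ : (g : ℤ) ∣ c := by
    rw [← Int.pow_dvd_pow_iff two_ne_zero, ← h]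
    exact ⟨a' * b', by ring⟩
  have hprod : a' * b' = t ^ 2 := by
    apply mul_left_cancel₀ (pow_ne_zero 2 hg.ne')
    linear_combination h
  obtain ⟨s, hs, rfl⟩ :=
    exists_eq_sq_of_isCoprime_of_mul_eq_sq hcop (pos_of_mul_pos_left ha hg.le) hprod
  obtain ⟨m, hm, rfl⟩ := exists_eq_sq_of_isCoprime_of_mul_eq_sq hcop.symm
    (pos_of_mul_pos_left hb hg.le) (by rw [mul_comm, hprod])
  exact ⟨g, s, m, hg, hs, hm, mul_comm _ _, mul_comm _ _⟩

theorem Int.sign_mul_sign_of_ne_zero {a : ℤ} (ha : a ≠ 0) : a.sign * a.sign = 1 := by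
  rw [← Int.sign_mul, Int.sign_eq_one_of_pos (mul_self_pos.mpr ha)]

theorem stmt10_general (k d : ℤ) (hd : 0 < d) (hne : k ≠ d ^ 2)
    (R : ℤ) (hR : R * (k - d ^ 2) = 4 * d ^ 2) :
    ∃ s v m : ℤ, 0 < s ∧ 0 < v ∧ 0 < m ∧ 2 * d = s * v * m ∧
      4 * k = s ^ 2 * v * (v * m ^ 2 + 4 * (k - d ^ 2).sign) := by
  set ε := (k - d ^ 2).sign
  have hD : k - d ^ 2 ≠ 0 := sub_ne_zero.mpr hne
  have hε : ε * ε = 1 := Int.sign_mul_sign_of_ne_zero hD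
  have hεD : 0 < ε * (k - d ^ 2) := by
    rw [Int.sign_mul_self_eq_abs]; exact abs_pos.mpr hD
  have hprod : ε * (k - d ^ 2) * (ε * R) = (2 * d) ^ 2 := by
    linear_combination (k - d ^ 2) * R * hε + hR
  have hεR : 0 < ε * R := pos_of_mul_pos_right (by rw [hprod]; positivity) hεD.le
  obtain ⟨v, s, m, hv, hs, hm, hvs, hvm⟩ := Int.exists_eq_mul_sq_of_mul_eq_sq hεD hεR hprod
  have h2d : 2 * d = s * v * m := by
    refine (pow_left_inj₀ (by positivity) (by positivity) two_ne_zero).mp ?_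
    rw [← hprod, hvs, hvm]; ring
  refine ⟨s, v, m, hs, hv, hm, h2d, ?_⟩
  linear_combination 4 * ε * hvs - 4 * (k - d ^ 2) * hε + (2 * d + s * v * m) * h2d

/-- Suppose `k, d` are positive integers such that `R = 4d²/(k−d²)` is an integer.
Then there exist positive integers `s, v, m` such that `d = svm/2` and
`k = s²v(vm² + 4ε)/4`, where `ε = sgn(k − d²)`. -/
theorem stmt10 (k d : ℤ) (hk : 0 < k) (hd : 0 < d) (hne : k ≠ d ^ 2)
    (R : ℤ) (hR : R * (k - d ^ 2) = 4 * d ^ 2) :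
    ∃ s v m : ℤ, 0 < s ∧ 0 < v ∧ 0 < m ∧ 2 * d = s * v * m ∧
      4 * k = s ^ 2 * v * (v * m ^ 2 + 4 * (k - d ^ 2).sign) :=
  stmt10_general k d hd hne R hR
end

section
/- With a_n defined by a_0 = 0, a_1 = 1, a_{n+1} = v_n m a_n + ε a_{n−1} (v_n = v for even n, 1 for odd n), one has the closed form a_n = ((d+√k)^n − (d−√k)^n)/(2 s^{n−1} v^{⌊n/2⌋} √k) for all n ≥ 1, where d = svm/2 and k = s²v(vm²+4ε)/4. -/
/-- `v_n = v` for even `n`, `v_n = 1` for odd `n`. -/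
def vv (v : ℤ) (n : ℕ) : ℤ := if Even n then v else 1

/-- With `a_n` defined by `a_0 = 0`, `a_1 = 1`, `a_{n+1} = v_n m a_n + ε a_{n−1}`
(`v_n = v` for even `n`, `1` for odd `n`), one has the closed form
`a_n = ((d+√k)^n − (d−√k)^n)/(2 s^{n−1} v^{⌊n/2⌋} √k)` for all `n ≥ 1`, where
`d = svm/2` and `k = s²v(vm²+4ε)/4`. -/
theorem stmt12 (s v m : ℤ) (hs : 0 < s) (hv : 0 < v) (hm : 0 < m)
    (ε : ℤ) (hε : ε = 1 ∨ ε = -1)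
    (a : ℕ → ℤ) (ha0 : a 0 = 0) (ha1 : a 1 = 1)
    (harec : ∀ n : ℕ, a (n + 2) = vv v (n + 1) * m * a (n + 1) + ε * a n)
    (dR kR : ℝ) (hdR : dR = (s : ℝ) * (v : ℝ) * (m : ℝ) / 2)
    (hkR : kR = (s : ℝ) ^ 2 * (v : ℝ) * ((v : ℝ) * (m : ℝ) ^ 2 + 4 * (ε : ℝ)) / 4)
    (hirr : Irrational (Real.sqrt kR)) :
    ∀ n : ℕ, 1 ≤ n →
      (a n : ℝ) = ((dR + Real.sqrt kR) ^ n - (dR - Real.sqrt kR) ^ n) /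
        (2 * (s : ℝ) ^ (n - 1) * (v : ℝ) ^ (n / 2) * Real.sqrt kR) := by
  set r := Real.sqrt kR with hr
  have hk0 : 0 ≤ kR := by
    by_contra h
    push_neg at h
    have : r = 0 := by rw [hr]; exact Real.sqrt_eq_zero_of_nonpos h.le
    rw [this] at hirr
    exact hirr ⟨0, by simp⟩
  have hr0 : r ≠ 0 := by
    intro h
    rw [h] at hirr
    exact hirr ⟨0, by simp⟩
  have hsq : r ^ 2 = kR := Real.sq_sqrt hk0
  have h1 : (dR + r) ^ 2 = s * v * m * (dR + r) + s ^ 2 * v * ε := by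
    subst hdR hkR; linear_combination hsq
  have h2 : (dR - r) ^ 2 = s * v * m * (dR - r) + s ^ 2 * v * ε := by
    subst hdR hkR; linear_combination hsq
  have key : ∀ n : ℕ,
      (a (n + 1) : ℝ) * (2 * (s : ℝ) ^ n * (v : ℝ) ^ ((n + 1) / 2) * r)
        = (dR + r) ^ (n + 1) - (dR - r) ^ (n + 1) ∧
      (a (n + 2) : ℝ) * (2 * (s : ℝ) ^ (n + 1) * (v : ℝ) ^ ((n + 2) / 2) * r)
        = (dR + r) ^ (n + 2) - (dR - r) ^ (n + 2) := by
    intro n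
    induction n with
    | zero =>
      constructor
      · rw [ha1]; push_cast; ring
      · have ha2 : a 2 = m := by
          have := harec 0
          simp [vv, ha0, ha1] at this
          simpa using this
        rw [ha2]
        have : ((0:ℕ) + 2) / 2 = 1 := by norm_num
        rw [this, hdR]
        push_cast; ring
    | succ k ih =>
      refine ⟨ih.2, ?_⟩
      have hω : (dR + r) ^ (k + 3)
          = s * v * m * (dR + r) ^ (k + 2) + s ^ 2 * v * ε * (dR + r) ^ (k + 1) := by
        have e : (dR + r) ^ (k + 3) = (dR + r) ^ (k + 1) * (dR + r) ^ 2 := by ring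
        rw [e, h1]; ring
      have hω' : (dR - r) ^ (k + 3)
          = s * v * m * (dR - r) ^ (k + 2) + s ^ 2 * v * ε * (dR - r) ^ (k + 1) := by
        have e : (dR - r) ^ (k + 3) = (dR - r) ^ (k + 1) * (dR - r) ^ 2 := by ring
        rw [e, h2]; ring
      have hrec := harec (k + 1)
      show (a (k + 3) : ℝ) * (2 * (s : ℝ) ^ (k + 2) * (v : ℝ) ^ ((k + 3) / 2) * r)
          = (dR + r) ^ (k + 3) - (dR - r) ^ (k + 3)
      rw [hω, hω']
      have goalRHS : (s:ℝ) * v * m * (dR + r) ^ (k + 2) + s ^ 2 * v * ε * (dR + r) ^ (k + 1)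
          - (s * v * m * (dR - r) ^ (k + 2) + s ^ 2 * v * ε * (dR - r) ^ (k + 1))
          = s * v * m * ((dR + r) ^ (k + 2) - (dR - r) ^ (k + 2))
            + s ^ 2 * v * ε * ((dR + r) ^ (k + 1) - (dR - r) ^ (k + 1)) := by ring
      rw [goalRHS, ← ih.1, ← ih.2]
      rcases Nat.even_or_odd k with ⟨t, ht⟩ | ⟨t, ht⟩
      · -- k even: vv (k+2) = v
        have hvv : vv v (k + 2) = v := by
          simp [vv, ht, Nat.even_add, parity_simps]
        rw [hrec, hvv]
        subst ht
        have e1 : (t + t + 3) / 2 = t + 1 := by omega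
        have e2 : (t + t + 2) / 2 = t + 1 := by omega
        have e3 : (t + t + 1) / 2 = t := by omega
        rw [e1, e2, e3]
        push_cast
        ring
      · -- k odd: vv (k+2) = 1
        have hvv : vv v (k + 2) = 1 := by
          simp [vv, ht, Nat.even_add, parity_simps]
        rw [hrec, hvv]
        subst ht
        have e1 : (2 * t + 1 + 3) / 2 = t + 2 := by omega
        have e2 : (2 * t + 1 + 2) / 2 = t + 1 := by omega
        have e3 : (2 * t + 1 + 1) / 2 = t + 1 := by omega
        rw [e1, e2, e3]
        push_cast
        ring
  intro n hn
  obtain ⟨p, rfl⟩ : ∃ p, n = p + 1 := ⟨n - 1, by omega⟩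
  have hD : 2 * (s : ℝ) ^ (p + 1 - 1) * (v : ℝ) ^ ((p + 1) / 2) * r ≠ 0 := by
    apply mul_ne_zero
    apply mul_ne_zero
    apply mul_ne_zero
    · norm_num
    · exact pow_ne_zero _ (by exact_mod_cast hs.ne')
    · exact pow_ne_zero _ (by exact_mod_cast hv.ne')
    · exact hr0
  rw [eq_div_iff hD]
  have := (key p).1
  simpa using this
end

section
/- Let ξ be a real quadratic integer with purely periodic simple continued fraction expansion of period length L, satisfying ξ² − tξ − u = 0 with 0 > ξ̄ > −1. If p/q is the convergent of ξ formed from nL terms (n ≥ 1), then p/q is Pellian for ξ: q > 0, p/q > t/2, and p² − tpq − uq² = ±1. -/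
/-!
A purely periodic expansion does not terminate, so `ξ` is irrational, and its `nL`-th complete
quotient is `ξ` again. Hence `ξ = (ξ p + p') / (ξ q + q')` with `p'/q'` the previous convergent;
comparing coefficients with `ξ² = tξ + u` gives `q' = p - tq` and `p' = uq`. The determinant
identity `p' q - q' p = ±1` then reads `p² - tpq - uq² = ∓1`, and `q' ≥ 0` gives
`p / q ≥ t > t / 2`.
-/

open GenContFract (of)

theorem Stream'.Seq.get?_ne_none_of_periodic {α : Type*} {s : Stream'.Seq α} {L : ℕ} (hL : 0 < L)
    (hper : ∀ i, s.get? (i + L) = s.get? i) {i : ℕ} (hi : s.get? i ≠ none) (j : ℕ) :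
    s.get? j ≠ none := by
  have hshift : ∀ k, s.get? (i + k * L) = s.get? i := by
    intro k
    induction k with
    | zero => simp
    | succ k ih => rw [Nat.succ_mul, ← Nat.add_assoc, hper, ih]
  have hj : j ≤ i + j * L := le_add_left (Nat.le_mul_of_pos_right j hL)
  exact fun hnone => hi (hshift j ▸ s.le_stable hj hnone)

theorem Irrational.fract_ne_zero {x : ℝ} (hx : Irrational x) : Int.fract x ≠ 0 :=
  (hx.sub_intCast ⌊x⌋).ne_zero

theorem Irrational.coeffs_eq_of_eq_mobius {ξ : ℝ} (hξ : Irrational ξ) {t u a b a' b' : ℚ}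
    (hquad : ξ ^ 2 = t * ξ + u) (h : ξ = (ξ * a + a') / (ξ * b + b')) :
    b' = a - t * b ∧ a' = u * b := by
  have hden : ξ * b + b' ≠ 0 := fun h0 => hξ.ne_zero (by rw [h, h0, div_zero])
  rw [eq_div_iff hden] at h
  have hlin : ((t * b + b' - a : ℚ) : ℝ) * ξ = ((a' - u * b : ℚ) : ℝ) := by
    push_cast
    linear_combination h - b * hquad
  have hc : t * b + b' - a = 0 := by
    by_contra hc
    exact (hξ.ratCast_mul hc).ne_rat _ hlin
  have hd : a' - u * b = 0 := by
    rw [hc, Rat.cast_zero, zero_mul] at hlin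
    exact_mod_cast hlin.symm
  constructor <;> linarith

namespace GenContFract

section FloorRing

variable {K : Type*} [Field K] [LinearOrder K] [FloorRing K]

theorem contsAux_det_of_not_terminates {v : K} (hv : ¬(of v).Terminates) (m : ℕ) :
    ((of v).contsAux m).a * ((of v).contsAux (m + 1)).b -
      ((of v).contsAux m).b * ((of v).contsAux (m + 1)).a = (-1) ^ m := by
  cases m with
  | zero => simp
  | succ m =>
    have hdet := SimpContFract.determinant (s := SimpContFract.of v) (n := m)
      fun h => hv ⟨m, h⟩
    simp only [num_eq_conts_a, den_eq_conts_b, nth_cont_eq_succ_nth_contAux] at hdet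
    exact hdet

/-- The iterates `fractInv^[k] v` are the complete quotients of `v`. -/
noncomputable def fractInv (x : K) : K := (Int.fract x)⁻¹

variable [IsStrictOrderedRing K]

theorem one_le_of_den (v : K) (n : ℕ) : 1 ≤ (of v).dens n :=
  zeroth_den_eq_one.symm.le.trans <|
    monotone_nat_of_le_succ (f := (of v).dens) (fun _ => of_den_mono) n.zero_le

theorem of_s_get?_add (v : K) (k m : ℕ) :
    (of v).s.get? (k + m) = (of (fractInv^[k] v)).s.get? m := by
  induction k generalizing v with
  | zero => simp
  | succ k ih =>
    rw [Nat.add_right_comm, of_s_succ, ih, Function.iterate_succ_apply]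
    rfl

theorem one_lt_fractInv {x : K} (hx : Int.fract x ≠ 0) : 1 < fractInv x :=
  (one_lt_inv₀ ((Int.fract_nonneg x).lt_of_ne' hx)).mpr (Int.fract_lt_one x)

theorem of_injective [Archimedean K] [TopologicalSpace K] [OrderTopology K] :
    Function.Injective (of : K → GenContFract K) := fun _ _ h =>
  tendsto_nhds_unique (of_convergence _) (by rw [h]; exact of_convergence _)

end FloorRing

theorem irrational_iff_not_terminates {v : ℝ} : Irrational v ↔ ¬(of v).Terminates := by
  simp [Irrational, terminates_iff_rat, eq_comm]

theorem irrational_fractInv {x : ℝ} (hx : Irrational x) : Irrational (fractInv x) :=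
  (hx.sub_intCast ⌊x⌋).inv

theorem irrational_fractInv_iterate {v : ℝ} (hv : Irrational v) (k : ℕ) :
    Irrational (fractInv^[k] v) := by
  induction k with
  | zero => exact hv
  | succ k ih => rw [Function.iterate_succ_apply']; exact irrational_fractInv ih

theorem one_lt_fractInv_iterate_succ {v : ℝ} (hv : Irrational v) (k : ℕ) :
    1 < fractInv^[k + 1] v := by
  rw [Function.iterate_succ_apply']
  exact one_lt_fractInv (irrational_fractInv_iterate hv k).fract_ne_zero

theorem stream_eq_of_fractInv_iterate {v : ℝ} (hv : Irrational v) (k : ℕ) :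
    IntFractPair.stream v k = some (IntFractPair.of (fractInv^[k] v)) := by
  induction k generalizing v with
  | zero => rfl
  | succ k ih =>
    rw [IntFractPair.stream_succ hv.fract_ne_zero, Function.iterate_succ_apply]
    exact ih (irrational_fractInv hv)

theorem eq_fractInv_iterate_mobius {v : ℝ} (hv : Irrational v) (k : ℕ) :
    v = (fractInv^[k + 1] v * ((of v).contsAux (k + 1)).a + ((of v).contsAux k).a) /
      (fractInv^[k + 1] v * ((of v).contsAux (k + 1)).b + ((of v).contsAux k).b) := by
  have h := compExactValue_correctness_of_stream_eq_some (stream_eq_of_fractInv_iterate hv k)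
  rw [GenContFract.compExactValue, IntFractPair.of,
    if_neg (irrational_fractInv_iterate hv k).fract_ne_zero] at h
  simpa [nextConts, nextNum, nextDen, Function.iterate_succ_apply', fractInv, IntFractPair.of]
    using h

/-- `(of v).s` omits the head `⌊v⌋`, so `hprb` is what makes the expansion purely periodic. -/
theorem isPeriodicPt_fractInv_of_periodic {v : ℝ} (hv : Irrational v) {L : ℕ} (hL : 0 < L)
    (hper : ∀ i, (of v).s.get? (i + L) = (of v).s.get? i) {pr : Pair ℝ}
    (hpr : (of v).s.get? (L - 1) = some pr) (hprb : pr.b = (of v).h) :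
    Function.IsPeriodicPt fractInv L v := by
  obtain ⟨k, rfl⟩ : ∃ k, L = k + 1 := ⟨L - 1, by omega⟩
  have hhead : (of v).s.get? k = some ⟨1, ⌊fractInv^[k + 1] v⌋⟩ := by
    rw [← Nat.add_zero k, of_s_get?_add, Function.iterate_succ_apply']
    exact of_s_head (irrational_fractInv_iterate hv k).fract_ne_zero
  obtain rfl := Option.some.inj (hhead.symm.trans hpr)
  refine of_injective (GenContFract.ext ?_ (Stream'.Seq.ext fun m => ?_))
  · rw [of_h_eq_floor, ← hprb]
  · rw [← of_s_get?_add, Nat.add_comm, hper]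

/-- `(of ξ).contsAux m` holds the continuants `(p', q')` preceding `nums m / dens m`. -/
theorem contsAux_eq_of_fractInv_iterate_eq_self {ξ : ℝ} (hξ : Irrational ξ) {t u : ℤ}
    (hquad : ξ ^ 2 = t * ξ + u) {m : ℕ} (hfix : fractInv^[m + 1] ξ = ξ) :
    (of ξ).contsAux m = ⟨u * (of ξ).dens m, (of ξ).nums m - t * (of ξ).dens m⟩ := by
  rw [num_eq_conts_a, den_eq_conts_b, nth_cont_eq_succ_nth_contAux]
  obtain ⟨⟨a, b⟩, hab⟩ := exists_gcf_pair_rat_eq_of_nth_contsAux ξ (m + 1)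
  obtain ⟨⟨a', b'⟩, hab'⟩ := exists_gcf_pair_rat_eq_of_nth_contsAux ξ m
  have hmob := eq_fractInv_iterate_mobius hξ m
  rw [hfix, hab, hab'] at hmob
  obtain ⟨hb', ha'⟩ := hξ.coeffs_eq_of_eq_mobius (t := t) (u := u) (by push_cast; exact hquad) hmob
  simp only at hb' ha'
  subst hb' ha'
  rw [hab, hab']
  simp [Pair.map]

theorem nums_pell_of_fractInv_iterate_eq_self {ξ : ℝ} (hξ : Irrational ξ) {t u : ℤ}
    (hquad : ξ ^ 2 = t * ξ + u) {m : ℕ} (hfix : fractInv^[m + 1] ξ = ξ) :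
    (of ξ).nums m ^ 2 - t * (of ξ).nums m * (of ξ).dens m - u * (of ξ).dens m ^ 2 =
      (-1) ^ (m + 1) := by
  have hdet := contsAux_det_of_not_terminates (irrational_iff_not_terminates.mp hξ) m
  rw [contsAux_eq_of_fractInv_iterate_eq_self hξ hquad hfix, ← nth_cont_eq_succ_nth_contAux,
    ← num_eq_conts_a, ← den_eq_conts_b] at hdet
  linear_combination -hdet

theorem intCast_mul_dens_le_nums_of_fractInv_iterate_eq_self {ξ : ℝ} (hξ : Irrational ξ)
    {t u : ℤ} (hquad : ξ ^ 2 = t * ξ + u) {m : ℕ} (hfix : fractInv^[m + 1] ξ = ξ) :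
    t * (of ξ).dens m ≤ (of ξ).nums m := by
  have hprev := zero_le_of_contsAux_b (v := ξ) (n := m)
  rw [contsAux_eq_of_fractInv_iterate_eq_self hξ hquad hfix] at hprev
  exact sub_nonneg.mp hprev

end GenContFract

open GenContFract

/-- Let `ξ` be a real quadratic integer satisfying `ξ² − tξ − u = 0` with `0 > ξ̄ > −1`
(`ξ̄ = t − ξ`), whose simple continued fraction expansion `[c₀; c₁, c₂, …]` is purely
periodic with period length `L` (i.e. `c_{i+L} = c_i` for all `i ≥ 0`). If `p/q` is the
convergent of `ξ` formed from `nL` terms (`n ≥ 1`), then `p/q` is Pellian for `ξ`: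
`q > 0`, `p/q > t/2`, and `p² − tpq − uq² = ±1`. -/
theorem stmt18 (t u : ℤ) (ξ : ℝ) (hξ : ξ ^ 2 - (t : ℝ) * ξ - (u : ℝ) = 0)
    (hconj : -1 < (t : ℝ) - ξ ∧ (t : ℝ) - ξ < 0)
    (L : ℕ) (hL : 0 < L)
    (hper : ∀ i : ℕ, (GenContFract.of ξ).s.get? (i + L) = (GenContFract.of ξ).s.get? i)
    (hper0 : ∃ pr : GenContFract.Pair ℝ,
      (GenContFract.of ξ).s.get? (L - 1) = some pr ∧ pr.b = (GenContFract.of ξ).h)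
    (n : ℕ) (hn : 1 ≤ n) (p q : ℤ)
    (hp : (p : ℝ) = (GenContFract.of ξ).nums (n * L - 1))
    (hq : (q : ℝ) = (GenContFract.of ξ).dens (n * L - 1)) :
    0 < q ∧ (p : ℝ) / (q : ℝ) > (t : ℝ) / 2 ∧
      (p ^ 2 - t * p * q - u * q ^ 2 = 1 ∨ p ^ 2 - t * p * q - u * q ^ 2 = -1) := by
  obtain ⟨pr, hpr, hprb⟩ := hper0
  have hirr : Irrational ξ := irrational_iff_not_terminates.mpr fun ⟨k, hk⟩ =>
    Stream'.Seq.get?_ne_none_of_periodic hL hper (i := L - 1) (by simp [hpr]) k hk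
  obtain ⟨m, hm⟩ : ∃ m, n * L = m + 1 := ⟨n * L - 1, by have := Nat.mul_pos hn hL; omega⟩
  have hfix : fractInv^[m + 1] ξ = ξ := by
    rw [← hm, mul_comm]
    exact (isPeriodicPt_fractInv_of_periodic hirr hL hper hpr hprb).mul_const n
  have hquad : ξ ^ 2 = t * ξ + u := by linear_combination hξ
  rw [hm, Nat.add_sub_cancel] at hp hq
  have hpell := nums_pell_of_fractInv_iterate_eq_self hirr hquad hfix
  have hle := intCast_mul_dens_le_nums_of_fractInv_iterate_eq_self hirr hquad hfix
  rw [← hp, ← hq] at hpell hle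
  have hq1 : (1 : ℝ) ≤ q := hq ▸ one_le_of_den ξ m
  have ht : (0 : ℝ) < t := by
    linarith [hconj.1, hfix ▸ one_lt_fractInv_iterate_succ hirr m]
  refine ⟨by exact_mod_cast hq1, ?_, ?_⟩
  · linarith [(le_div_iff₀ (by linarith : (0 : ℝ) < q)).mpr hle]
  · rw [show p ^ 2 - t * p * q - u * q ^ 2 = (-1) ^ (m + 1) by exact_mod_cast hpell]
    exact neg_one_pow_eq_or ℤ _
end
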